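/- Let $e_1,\dots,e_n$ be random unit vectors in $\mathbb{R}^3$ with $\mathbb{E}[\langle e_i,e_j\rangle] = -1/(n-1)$ for all $i\ne j$ ($n\ge 2$), and let $v_k = \sum_{i=1}^k e_i$, $c = \frac1n\sum_{k=1}^n v_k$. Then the expected squared radius of gyration $\mathbb{E}\left[\frac1n\sum_{k=1}^n \|v_k - c\|^2\right]$ equals $\frac{n+1}{12}$. -/

import Mathlib

/-!
The centred vertex `v k - c` is the fixed linear combination `∑ i, a k i • e i` of the edges with
`a k i = [i ≤ k] - (n + 1 - i) / n`, since `e i` enters the `n + 1 - i` vertices `v i, …, v n`.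
For unit vectors whose pairwise inner products have mean `ρ`,
`𝔼 ‖∑ i, a i • e i‖² = (1 - ρ) ∑ i, a i ^ 2 + ρ (∑ i, a i) ^ 2`, and for `ρ = -1 / (n - 1)` and
these coefficients this equals `(n + 1) / 12` for every single vertex `k`.
-/

open MeasureTheory Finset
open scoped InnerProductSpace

theorem sum_Icc_sum_Icc_eq_sum_nsmul {M : Type*} [AddCommMonoid M] (x : ℕ → M) (n : ℕ) :
    ∑ k ∈ Icc 1 n, ∑ i ∈ Icc 1 k, x i = ∑ i ∈ Icc 1 n, (n + 1 - i) • x i := by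
  rw [sum_comm' (t' := Icc 1 n) (s' := fun i => Icc i n) (by intros; simp only [mem_Icc]; omega)]
  simp [sum_const, Nat.card_Icc]

theorem Icc_filter_le {k n : ℕ} (hk : k ≤ n) : (Icc 1 n).filter (· ≤ k) = Icc 1 k := by
  ext i; simp only [mem_filter, mem_Icc]; omega

theorem sum_Icc_quadratic (a b c : ℝ) (m : ℕ) :
    ∑ i ∈ Icc 1 m, (a + b * i + c * i ^ 2)
      = a * m + b * (m * (m + 1) / 2) + c * (m * (m + 1) * (2 * m + 1) / 6) := by
  induction m with
  | zero => simp
  | succ m ih =>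
    rw [sum_Icc_succ_top (by omega), ih]
    push_cast
    ring

noncomputable def deviationCoeff (n k i : ℕ) : ℝ := (if i ≤ k then 1 else 0) - (n + 1 - i) / n

theorem sub_centroid_eq_sum_deviationCoeff_smul {M : Type*} [AddCommGroup M] [Module ℝ M]
    (x : ℕ → M) {n k : ℕ} (hk : k ≤ n) :
    (∑ i ∈ Icc 1 k, x i) - (n : ℝ)⁻¹ • ∑ k' ∈ Icc 1 n, ∑ i ∈ Icc 1 k', x i
      = ∑ i ∈ Icc 1 n, deviationCoeff n k i • x i := by
  have hprefix : ∑ i ∈ Icc 1 k, x i = ∑ i ∈ Icc 1 n, (if i ≤ k then (1 : ℝ) else 0) • x i := by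
    simp only [ite_smul, one_smul, zero_smul, ← sum_filter, Icc_filter_le hk]
  rw [hprefix, sum_Icc_sum_Icc_eq_sum_nsmul, smul_sum, ← sum_sub_distrib]
  refine sum_congr rfl fun i hi => ?_
  have hin : i ≤ n + 1 := by simp only [mem_Icc] at hi; omega
  rw [← Nat.cast_smul_eq_nsmul ℝ, smul_smul, ← sub_smul, deviationCoeff, Nat.cast_sub hin]
  congr 1
  push_cast
  ring

theorem sum_deviationCoeff {n k : ℕ} (hk : k ≤ n) (hn : (n : ℝ) ≠ 0) :
    ∑ i ∈ Icc 1 n, deviationCoeff n k i = k - (n + 1) / 2 := by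
  have hlin : ∀ i : ℕ, ((n : ℝ) + 1 - i) / n = (n + 1) / n + -1 / n * i + 0 * i ^ 2 := by
    intro i; field_simp; ring
  simp only [deviationCoeff, sum_sub_distrib, ← sum_filter, Icc_filter_le hk, hlin,
    sum_Icc_quadratic, sum_const, Nat.card_Icc, Nat.add_sub_cancel, nsmul_eq_mul]
  field_simp
  ring

theorem sum_deviationCoeff_sq {n k : ℕ} (hk : k ≤ n) (hn : (n : ℝ) ≠ 0) :
    ∑ i ∈ Icc 1 n, deviationCoeff n k i ^ 2
      = (k ^ 2 - (n + 1) * k + (n + 1) * (2 * n + 1) / 6) / n := by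
  have hsq : ∀ i : ℕ, deviationCoeff n k i ^ 2
      = (if i ≤ k then (1 - 2 * ((n : ℝ) + 1) / n) + 2 / n * i + 0 * i ^ 2 else 0)
        + ((((n : ℝ) + 1) / n) ^ 2 + -2 * ((n : ℝ) + 1) / n ^ 2 * i + 1 / n ^ 2 * i ^ 2) := by
    intro i
    unfold deviationCoeff
    split_ifs <;> field_simp <;> ring
  rw [sum_congr rfl fun i _ => hsq i, sum_add_distrib, ← sum_filter, Icc_filter_le hk,
    sum_Icc_quadratic, sum_Icc_quadratic]
  field_simp
  ring

section Expectation

variable {Ω F ι : Type*} [MeasurableSpace Ω] {μ : Measure Ω}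
  [NormedAddCommGroup F] [InnerProductSpace ℝ F]

theorem norm_sum_smul_sq (s : Finset ι) (a : ι → ℝ) (x : ι → F) :
    ‖∑ i ∈ s, a i • x i‖ ^ 2 = ∑ i ∈ s, ∑ j ∈ s, a i * a j * ⟪x i, x j⟫_ℝ := by
  rw [← real_inner_self_eq_norm_sq, sum_inner]
  refine sum_congr rfl fun i _ => ?_
  rw [inner_sum]
  refine sum_congr rfl fun j _ => ?_
  rw [real_inner_smul_left, real_inner_smul_right, mul_assoc]

theorem integrable_norm_sum_smul_sq {s : Finset ι} (a : ι → ℝ) {e : ι → Ω → F}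
    (hint : ∀ i ∈ s, ∀ j ∈ s, Integrable (fun ω => ⟪e i ω, e j ω⟫_ℝ) μ) :
    Integrable (fun ω => ‖∑ i ∈ s, a i • e i ω‖ ^ 2) μ := by
  simp only [norm_sum_smul_sq]
  exact integrable_finsetSum _ fun i hi => integrable_finsetSum _ fun j hj =>
    (hint i hi j hj).const_mul _

theorem integral_norm_sum_smul_sq {s : Finset ι} (a : ι → ℝ) {e : ι → Ω → F}
    (hint : ∀ i ∈ s, ∀ j ∈ s, Integrable (fun ω => ⟪e i ω, e j ω⟫_ℝ) μ) :
    ∫ ω, ‖∑ i ∈ s, a i • e i ω‖ ^ 2 ∂μ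
      = ∑ i ∈ s, ∑ j ∈ s, a i * a j * ∫ ω, ⟪e i ω, e j ω⟫_ℝ ∂μ := by
  simp only [norm_sum_smul_sq]
  rw [integral_finsetSum _ fun i hi => integrable_finsetSum _ fun j hj =>
    (hint i hi j hj).const_mul _]
  refine sum_congr rfl fun i hi => ?_
  rw [integral_finsetSum _ fun j hj => (hint i hi j hj).const_mul _]
  simp only [integral_const_mul]

theorem sum_sum_mul_mul_ite_eq [DecidableEq ι] (s : Finset ι) (a : ι → ℝ) (ρ : ℝ) :
    ∑ i ∈ s, ∑ j ∈ s, a i * a j * (if i = j then 1 else ρ)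
      = (1 - ρ) * ∑ i ∈ s, a i ^ 2 + ρ * (∑ i ∈ s, a i) ^ 2 := by
  have hsplit : ∀ i j, a i * a j * (if i = j then 1 else ρ)
      = (if i = j then (1 - ρ) * a i ^ 2 else 0) + ρ * (a i * a j) := by
    intro i j
    split_ifs with h
    · subst h; ring
    · ring
  simp only [hsplit, sum_add_distrib, sum_ite_eq, ← mul_sum, sq (∑ i ∈ s, a i), sum_mul_sum]
  rw [sum_ite_of_true fun _ h => h, ← mul_sum]

theorem integral_norm_sum_smul_sq_of_equicorrelated [IsProbabilityMeasure μ] {s : Finset ι}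
    (a : ι → ℝ) {e : ι → Ω → F} (ρ : ℝ) (hunit : ∀ i ∈ s, ∀ ω, ‖e i ω‖ = 1)
    (hint : ∀ i ∈ s, ∀ j ∈ s, Integrable (fun ω => ⟪e i ω, e j ω⟫_ℝ) μ)
    (hcorr : ∀ i ∈ s, ∀ j ∈ s, i ≠ j → ∫ ω, ⟪e i ω, e j ω⟫_ℝ ∂μ = ρ) :
    ∫ ω, ‖∑ i ∈ s, a i • e i ω‖ ^ 2 ∂μ
      = (1 - ρ) * ∑ i ∈ s, a i ^ 2 + ρ * (∑ i ∈ s, a i) ^ 2 := by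
  classical
  have hgram : ∀ i ∈ s, ∀ j ∈ s, ∫ ω, ⟪e i ω, e j ω⟫_ℝ ∂μ = if i = j then 1 else ρ := by
    intro i hi j hj
    split_ifs with h
    · subst h
      simp [hunit i hi]
    · exact hcorr i hi j hj h
  rw [integral_norm_sum_smul_sq a hint, ← sum_sum_mul_mul_ite_eq]
  exact sum_congr rfl fun i hi => sum_congr rfl fun j hj => by rw [hgram i hi j hj]

end Expectation

theorem integral_norm_sum_deviationCoeff_smul_sq {Ω F : Type*} [MeasurableSpace Ω]
    {μ : Measure Ω} [IsProbabilityMeasure μ] [NormedAddCommGroup F] [InnerProductSpace ℝ F]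
    {n k : ℕ} (hn : 2 ≤ n) (hk : k ≤ n) {e : ℕ → Ω → F}
    (hunit : ∀ i ∈ Icc 1 n, ∀ ω, ‖e i ω‖ = 1)
    (hint : ∀ i ∈ Icc 1 n, ∀ j ∈ Icc 1 n, Integrable (fun ω => ⟪e i ω, e j ω⟫_ℝ) μ)
    (hcorr : ∀ i ∈ Icc 1 n, ∀ j ∈ Icc 1 n, i ≠ j →
      ∫ ω, ⟪e i ω, e j ω⟫_ℝ ∂μ = -1 / ((n : ℝ) - 1)) :
    ∫ ω, ‖∑ i ∈ Icc 1 n, deviationCoeff n k i • e i ω‖ ^ 2 ∂μ = ((n : ℝ) + 1) / 12 := by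
  have hn0 : (n : ℝ) ≠ 0 := by positivity
  have hn1 : (n : ℝ) - 1 ≠ 0 := by
    have : (2 : ℝ) ≤ n := by exact_mod_cast hn
    linarith
  rw [integral_norm_sum_smul_sq_of_equicorrelated _ _ hunit hint hcorr, sum_deviationCoeff hk hn0,
    sum_deviationCoeff_sq hk hn0]
  field_simp
  ring

/-- For a random ideal ring of length `n ≥ 2` with vertices `v k = e 1 + ⋯ + e k` and
center of mass `c`, the expected squared radius of gyration is `(n+1)/12`. -/
theorem expected_radius_of_gyration_ring (n : ℕ) (hn : 2 ≤ n)
    {Ω : Type*} [MeasurableSpace Ω] (μ : Measure Ω) [IsProbabilityMeasure μ]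
    (e : ℕ → Ω → EuclideanSpace ℝ (Fin 3))
    (hunit : ∀ i ∈ Finset.Icc 1 n, ∀ ω, ‖e i ω‖ = 1)
    (hint : ∀ i ∈ Finset.Icc 1 n, ∀ i' ∈ Finset.Icc 1 n,
      Integrable (fun ω => ⟪e i ω, e i' ω⟫_ℝ) μ)
    (hexp : ∀ i ∈ Finset.Icc 1 n, ∀ i' ∈ Finset.Icc 1 n, i ≠ i' →
      ∫ ω, ⟪e i ω, e i' ω⟫_ℝ ∂μ = -1 / ((n : ℝ) - 1)) :
    ∫ ω, (1 / (n : ℝ)) * ∑ k ∈ Finset.Icc 1 n,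
        ‖(∑ i ∈ Finset.Icc 1 k, e i ω)
          - (n : ℝ)⁻¹ • ∑ k' ∈ Finset.Icc 1 n, ∑ i ∈ Finset.Icc 1 k', e i ω‖ ^ 2 ∂μ
      = ((n : ℝ) + 1) / 12 := by
  have hdev : ∀ k ∈ Icc 1 n, ∀ ω, (∑ i ∈ Icc 1 k, e i ω)
      - (n : ℝ)⁻¹ • ∑ k' ∈ Icc 1 n, ∑ i ∈ Icc 1 k', e i ω
        = ∑ i ∈ Icc 1 n, deviationCoeff n k i • e i ω := fun k hk ω =>
    sub_centroid_eq_sum_deviationCoeff_smul (e · ω) (mem_Icc.1 hk).2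
  calc _ = (1 / (n : ℝ)) * ∑ k ∈ Icc 1 n,
          ∫ ω, ‖∑ i ∈ Icc 1 n, deviationCoeff n k i • e i ω‖ ^ 2 ∂μ := by
        rw [← integral_finsetSum _ fun k _ => integrable_norm_sum_smul_sq _ hint,
          ← integral_const_mul]
        refine integral_congr_ae (Filter.Eventually.of_forall fun ω => ?_)
        dsimp only
        rw [sum_congr rfl fun k hk => by rw [hdev k hk ω]]
    _ = ((n : ℝ) + 1) / 12 := by
        rw [sum_congr rfl fun k hk => integral_norm_sum_deviationCoeff_smul_sq hn
          (mem_Icc.1 hk).2 hunit hint hexp, sum_const, Nat.card_Icc, Nat.add_sub_cancel,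
          nsmul_eq_mul]
        field_simp
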